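/- arXiv:1106.5708 — 2 statements merged into one kernel-verified Lean document; each statement's English description precedes it below -/
import Mathlib

section
/- Fix a nonzero real number q and integers k ≥ 1, r ≥ 1, and let A = A(ℂP³_θ). Given complex matrices B₁, B₂ ∈ M_{k×k}(ℂ), I ∈ M_{k×r}(ℂ), J ∈ M_{r×k}(ℂ), write M* for the conjugate transpose of a complex matrix M, and define the block matrices over A: σ ∈ M_{(2k+r)×k}(A), the vertical stack of the blocks B₁w₃ − B₂*w₄ + q·w₁·1_k, B₂w₃ + B₁*w₄ + q⁻¹·w₂·1_k, and Jw₃ + I*w₄; and τ ∈ M_{k×(2k+r)}(A), the horizontal row of the blocks −q⁻²B₂w₃ − q⁻²B₁*w₄ − q⁻¹·w₂·1_k, B₁w₃ − B₂*w₄ + q⁻¹·w₁·1_k, and Iw₃ − J*w₄. Set E_c = B₁B₂ − q⁻²B₂B₁ + IJ and E_r = B₁B₁* − q⁻²B₁*B₁ + q⁻²B₂B₂* − B₂*B₂ + II* − J*J. Then τ·σ = E_c·w₃² − E_c*·w₄² + E_r·w₃w₄ in M_{k×k}(A). In particular, τ·σ = 0 if and only if both the braided complex ADHM equation E_c = 0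 and the braided real ADHM equation E_r = 0 hold. -/
/-!
Expanding `τ·σ` block by block, every monomial involving `w₁` or `w₂` cancels: the mixed ones
because `w₃, w₄` are central, and `-q⁻¹q·w₂w₁` against `q⁻²·w₁w₂ = w₂w₁`. What is left is
`E_c·w₃² − E_c*·w₄² + E_r·w₃w₄`, with `E_c = complexADHM` and `E_r = realADHM`. Instead of the
basis of ordered monomials, the converse uses the characters of `A(ℂP³_θ)` killing `w₁, w₂`:
at `(w₃, w₄) ↦ (1, 0)` only `E_c` survives, and then at `(1, 1)` only `E_r`.
-/

noncomputable section

open FreeAlgebra Matrix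

/-- The relations of the homogeneous coordinate algebra `A(ℂP³_θ)` of the noncommutative
twistor space: `w₁w₂ = q²w₂w₁` together with `wᵢwₖ = wₖwᵢ` for `k ∈ {3,4}` and all `i`
(generators indexed by `0, 1, 2, 3`). -/
inductive P3Rel (q : ℝ) : FreeAlgebra ℂ (Fin 4) → FreeAlgebra ℂ (Fin 4) → Prop
  | r12 : P3Rel q (ι ℂ 0 * ι ℂ 1) (((q : ℂ)) ^ 2 • (ι ℂ 1 * ι ℂ 0))
  | central (i k : Fin 4) (h : k = 2 ∨ k = 3) : P3Rel q (ι ℂ i * ι ℂ k) (ι ℂ k * ι ℂ i)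

/-- The homogeneous coordinate algebra `A = A(ℂP³_θ)`. -/
abbrev P3Alg (q : ℝ) := RingQuot (P3Rel q)

/-- The generators `w₁, w₂, w₃, w₄` of `A(ℂP³_θ)` (indexed by `0, 1, 2, 3`). -/
def wP3 (q : ℝ) (i : Fin 4) : P3Alg q := RingQuot.mkAlgHom ℂ (P3Rel q) (ι ℂ i)

/-- For a complex matrix `M` and an algebra element `a`, the matrix `M·a` with
entries `M_{uv} a`. -/
def cMat {m n : Type*} {A : Type*} [Semiring A] [Algebra ℂ A]
    (M : Matrix m n ℂ) (a : A) : Matrix m n A :=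
  M.map fun c => algebraMap ℂ A c * a

/-- The self-conjugate monad differential `σ` on `ℂP³_θ`: the vertical stack of the blocks
`B₁w₃ − B₂*w₄ + q·w₁·1_k`, `B₂w₃ + B₁*w₄ + q⁻¹·w₂·1_k` and `Jw₃ + I*w₄`. -/
def σTw (q : ℝ) (k r : ℕ) (B1 B2 : Matrix (Fin k) (Fin k) ℂ)
    (I : Matrix (Fin k) (Fin r) ℂ) (J : Matrix (Fin r) (Fin k) ℂ) :
    Matrix (Fin k ⊕ (Fin k ⊕ Fin r)) (Fin k) (P3Alg q) :=
  Matrix.fromRows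
    (cMat B1 (wP3 q 2) + cMat (-B2ᴴ) (wP3 q 3)
      + cMat ((q : ℂ) • (1 : Matrix (Fin k) (Fin k) ℂ)) (wP3 q 0))
    (Matrix.fromRows
      (cMat B2 (wP3 q 2) + cMat B1ᴴ (wP3 q 3)
        + cMat (((q : ℂ))⁻¹ • (1 : Matrix (Fin k) (Fin k) ℂ)) (wP3 q 1))
      (cMat J (wP3 q 2) + cMat Iᴴ (wP3 q 3)))

/-- The self-conjugate monad differential `τ` on `ℂP³_θ`: the horizontal row of the
blocks `−q⁻²B₂w₃ − q⁻²B₁*w₄ − q⁻¹·w₂·1_k`, `B₁w₃ − B₂*w₄ + q⁻¹·w₁·1_k` and `Iw₃ − J*w₄`. -/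
def τTw (q : ℝ) (k r : ℕ) (B1 B2 : Matrix (Fin k) (Fin k) ℂ)
    (I : Matrix (Fin k) (Fin r) ℂ) (J : Matrix (Fin r) (Fin k) ℂ) :
    Matrix (Fin k) (Fin k ⊕ (Fin k ⊕ Fin r)) (P3Alg q) :=
  Matrix.fromCols
    (cMat (-((q : ℂ) ^ 2)⁻¹ • B2) (wP3 q 2) + cMat (-((q : ℂ) ^ 2)⁻¹ • B1ᴴ) (wP3 q 3)
      + cMat (-((q : ℂ))⁻¹ • (1 : Matrix (Fin k) (Fin k) ℂ)) (wP3 q 1))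
    (Matrix.fromCols
      (cMat B1 (wP3 q 2) + cMat (-B2ᴴ) (wP3 q 3)
        + cMat (((q : ℂ))⁻¹ • (1 : Matrix (Fin k) (Fin k) ℂ)) (wP3 q 0))
      (cMat I (wP3 q 2) + cMat (-Jᴴ) (wP3 q 3)))

lemma wP3_mul_comm (q : ℝ) (i : Fin 4) {k : Fin 4} (hk : k = 2 ∨ k = 3) :
    wP3 q i * wP3 q k = wP3 q k * wP3 q i := by
  simp only [wP3, ← map_mul]
  exact RingQuot.mkAlgHom_rel ℂ (P3Rel.central i k hk)

lemma wP3_zero_mul_wP3_one (q : ℝ) :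
    wP3 q 0 * wP3 q 1 = (q : ℂ) ^ 2 • (wP3 q 1 * wP3 q 0) := by
  simp only [wP3, ← map_mul, ← map_smul]
  exact RingQuot.mkAlgHom_rel ℂ P3Rel.r12

section cMat

variable {m n p A : Type*}

lemma cMat_apply [Semiring A] [Algebra ℂ A] (M : Matrix m n ℂ) (a : A) (i : m) (j : n) :
    cMat M a i j = algebraMap ℂ A (M i j) * a := rfl

lemma cMat_mul_cMat [Fintype n] [Semiring A] [Algebra ℂ A] (M : Matrix m n ℂ)
    (N : Matrix n p ℂ) (a b : A) : cMat M a * cMat N b = cMat (M * N) (a * b) := by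
  ext i j
  simp only [Matrix.mul_apply, cMat_apply, map_sum, Finset.sum_mul, map_mul]
  refine Finset.sum_congr rfl fun u _ => ?_
  rw [mul_assoc, ← mul_assoc a, ← Algebra.commutes (N u j) a, mul_assoc, ← mul_assoc,
    ← mul_assoc]

lemma cMat_add [Semiring A] [Algebra ℂ A] (M N : Matrix m n ℂ) (a : A) :
    cMat (M + N) a = cMat M a + cMat N a := by
  ext i j; simp [cMat_apply, add_mul]

lemma cMat_sub [Ring A] [Algebra ℂ A] (M N : Matrix m n ℂ) (a : A) :
    cMat (M - N) a = cMat M a - cMat N a := by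
  ext i j; simp [cMat_apply, sub_mul]

lemma cMat_neg [Ring A] [Algebra ℂ A] (M : Matrix m n ℂ) (a : A) :
    cMat (-M) a = -cMat M a := by
  ext i j; simp [cMat_apply]

lemma cMat_smul [Semiring A] [Algebra ℂ A] (c : ℂ) (M : Matrix m n ℂ) (a : A) :
    cMat (c • M) a = c • cMat M a := by
  ext i j; simp [cMat_apply, Algebra.smul_def, mul_assoc]

lemma cMat_smul_right [Semiring A] [Algebra ℂ A] (c : ℂ) (M : Matrix m n ℂ) (a : A) :
    cMat M (c • a) = c • cMat M a := by
  ext i j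
  simp only [cMat_apply, Matrix.smul_apply, Algebra.smul_def, ← mul_assoc, Algebra.commutes c]

lemma cMat_zero [Semiring A] [Algebra ℂ A] (a : A) : cMat (0 : Matrix m n ℂ) a = 0 := by
  ext i j; simp [cMat_apply]

end cMat

def complexADHM {n m : Type*} [Fintype n] [Fintype m] (q : ℝ) (B1 B2 : Matrix n n ℂ)
    (I : Matrix n m ℂ) (J : Matrix m n ℂ) : Matrix n n ℂ :=
  B1 * B2 - ((q : ℂ) ^ 2)⁻¹ • (B2 * B1) + I * J

def realADHM {n m : Type*} [Fintype n] [Fintype m] (q : ℝ) (B1 B2 : Matrix n n ℂ)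
    (I : Matrix n m ℂ) (J : Matrix m n ℂ) : Matrix n n ℂ :=
  B1 * B1ᴴ - ((q : ℂ) ^ 2)⁻¹ • (B1ᴴ * B1) + ((q : ℂ) ^ 2)⁻¹ • (B2 * B2ᴴ)
    - B2ᴴ * B2 + I * Iᴴ - Jᴴ * J

theorem τTw_mul_σTw (q : ℝ) (k r : ℕ) (B1 B2 : Matrix (Fin k) (Fin k) ℂ)
    (I : Matrix (Fin k) (Fin r) ℂ) (J : Matrix (Fin r) (Fin k) ℂ) :
    τTw q k r B1 B2 I J * σTw q k r B1 B2 I J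
      = cMat (complexADHM q B1 B2 I J) (wP3 q 2 * wP3 q 2)
        - cMat (complexADHM q B1 B2 I J)ᴴ (wP3 q 3 * wP3 q 3)
        + cMat (realADHM q B1 B2 I J) (wP3 q 2 * wP3 q 3) := by
  have h02 := wP3_mul_comm q 0 (.inl rfl)
  have h12 := wP3_mul_comm q 1 (.inl rfl)
  have h32 := wP3_mul_comm q 3 (.inl rfl)
  have h03 := wP3_mul_comm q 0 (.inr rfl)
  have h13 := wP3_mul_comm q 1 (.inr rfl)
  rw [τTw, σTw, fromCols_mul_fromRows, fromCols_mul_fromRows, complexADHM, realADHM]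
  simp only [Matrix.add_mul, Matrix.mul_add, cMat_mul_cMat, wP3_zero_mul_wP3_one,
    h02, h12, h32, h03, h13, cMat_smul_right, cMat_smul, cMat_neg, cMat_add, cMat_sub,
    Matrix.smul_mul, Matrix.mul_smul, Matrix.neg_mul, Matrix.mul_neg, Matrix.one_mul,
    Matrix.mul_one, smul_smul, neg_smul, conjTranspose_add, conjTranspose_sub,
    conjTranspose_smul, conjTranspose_mul, star_inv₀, star_pow, Complex.star_def,
    Complex.conj_ofReal]
  match_scalars <;> field_simp <;> ring

def evalW34 (q : ℝ) (s t : ℂ) : P3Alg q →ₐ[ℂ] ℂ :=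
  RingQuot.liftAlgHom ℂ ⟨FreeAlgebra.lift ℂ ![0, 0, s, t], fun _ _ h => by
    cases h <;> simp [mul_comm]⟩

lemma evalW34_wP3 (q : ℝ) (s t : ℂ) (i : Fin 4) :
    evalW34 q s t (wP3 q i) = ![0, 0, s, t] i := by
  rw [wP3, evalW34, RingQuot.liftAlgHom_mkAlgHom_apply, FreeAlgebra.lift_ι_apply]

lemma cMat_w34_eq_zero_iff {n : Type*} (q : ℝ) (Ec Er : Matrix n n ℂ) :
    cMat Ec (wP3 q 2 * wP3 q 2) - cMat Ecᴴ (wP3 q 3 * wP3 q 3) + cMat Er (wP3 q 2 * wP3 q 3) = 0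
      ↔ Ec = 0 ∧ Er = 0 := by
  refine ⟨fun h => ?_, fun ⟨hc, hr⟩ => by simp [hc, hr, cMat_zero]⟩
  have eval (s t : ℂ) (i j : n) :
      Ec i j * (s * s) - star (Ec j i) * (t * t) + Er i j * (s * t) = 0 := by
    simpa [cMat_apply, evalW34_wP3] using congrArg (evalW34 q s t) (congrFun (congrFun h i) j)
  have hc : Ec = 0 := Matrix.ext fun i j => by simpa using eval 1 0 i j
  exact ⟨hc, Matrix.ext fun i j => by simpa [hc] using eval 1 1 i j⟩

theorem tau_mul_sigma_eq_real_ADHM_general (q : ℝ) (k r : ℕ)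
    (B1 B2 : Matrix (Fin k) (Fin k) ℂ) (I : Matrix (Fin k) (Fin r) ℂ)
    (J : Matrix (Fin r) (Fin k) ℂ) :
    τTw q k r B1 B2 I J * σTw q k r B1 B2 I J
        = cMat (B1 * B2 - ((q : ℂ) ^ 2)⁻¹ • (B2 * B1) + I * J) (wP3 q 2 * wP3 q 2)
          - cMat (B1 * B2 - ((q : ℂ) ^ 2)⁻¹ • (B2 * B1) + I * J)ᴴ (wP3 q 3 * wP3 q 3)
          + cMat (B1 * B1ᴴ - ((q : ℂ) ^ 2)⁻¹ • (B1ᴴ * B1) + ((q : ℂ) ^ 2)⁻¹ • (B2 * B2ᴴ)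
              - B2ᴴ * B2 + I * Iᴴ - Jᴴ * J) (wP3 q 2 * wP3 q 3) ∧
      (τTw q k r B1 B2 I J * σTw q k r B1 B2 I J = 0 ↔
        (B1 * B2 - ((q : ℂ) ^ 2)⁻¹ • (B2 * B1) + I * J = 0 ∧
          B1 * B1ᴴ - ((q : ℂ) ^ 2)⁻¹ • (B1ᴴ * B1) + ((q : ℂ) ^ 2)⁻¹ • (B2 * B2ᴴ)
              - B2ᴴ * B2 + I * Iᴴ - Jᴴ * J = 0)) := by
  rw [τTw_mul_σTw]
  exact ⟨rfl, cMat_w34_eq_zero_iff q _ _⟩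

/-- `τ·σ = E_c·w₃² − E_c*·w₄² + E_r·w₃w₄`, where `E_c` and `E_r` are respectively the
braided complex and real ADHM expressions; in particular `τ·σ = 0` iff both braided
ADHM equations hold. -/
theorem tau_mul_sigma_eq_real_ADHM (q : ℝ) (hq : q ≠ 0) (k r : ℕ) (hk : 1 ≤ k) (hr : 1 ≤ r)
    (B1 B2 : Matrix (Fin k) (Fin k) ℂ) (I : Matrix (Fin k) (Fin r) ℂ)
    (J : Matrix (Fin r) (Fin k) ℂ) :
    τTw q k r B1 B2 I J * σTw q k r B1 B2 I J
        = cMat (B1 * B2 - ((q : ℂ) ^ 2)⁻¹ • (B2 * B1) + I * J) (wP3 q 2 * wP3 q 2)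
          - cMat (B1 * B2 - ((q : ℂ) ^ 2)⁻¹ • (B2 * B1) + I * J)ᴴ (wP3 q 3 * wP3 q 3)
          + cMat (B1 * B1ᴴ - ((q : ℂ) ^ 2)⁻¹ • (B1ᴴ * B1) + ((q : ℂ) ^ 2)⁻¹ • (B2 * B2ᴴ)
              - B2ᴴ * B2 + I * Iᴴ - Jᴴ * J) (wP3 q 2 * wP3 q 3) ∧
      (τTw q k r B1 B2 I J * σTw q k r B1 B2 I J = 0 ↔
        (B1 * B2 - ((q : ℂ) ^ 2)⁻¹ • (B2 * B1) + I * J = 0 ∧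
          B1 * B1ᴴ - ((q : ℂ) ^ 2)⁻¹ • (B1ᴴ * B1) + ((q : ℂ) ^ 2)⁻¹ • (B2 * B2ᴴ)
              - B2ᴴ * B2 + I * Iᴴ - Jᴴ * J = 0)) :=
  tau_mul_sigma_eq_real_ADHM_general q k r B1 B2 I J
end
end

section
/- Let q ∈ ℂ with q ≠ 0 and let A = A(Gr_θ(2;4)). Set X = (q/2)(Λ¹² − Λ³⁴) and R = (q/2)(Λ¹² + Λ³⁴) in A. Then X and R commute with each other, and the sphere relation q·Λ¹³Λ²⁴ − q·Λ¹⁴Λ²³ + X² = R² holds in A. (Under the *-structure with Λ¹³† = qΛ²⁴ and Λ¹⁴† = −q⁻¹Λ²³, this relation reads Λ¹³Λ¹³† + q²Λ¹⁴Λ¹⁴† + X² = R².) -/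
noncomputable section

open FreeAlgebra

/-- The relations of the homogeneous coordinate algebra `A(Gr_θ(2;4))` of the
noncommutative Klein quadric, on six generators indexed by `0 ↦ Λ¹², 1 ↦ Λ¹³, 2 ↦ Λ¹⁴,
3 ↦ Λ²³, 4 ↦ Λ²⁴, 5 ↦ Λ³⁴`. -/
inductive GrRel (q : ℂ) : FreeAlgebra ℂ (Fin 6) → FreeAlgebra ℂ (Fin 6) → Prop
  | r12_13 : GrRel q (ι ℂ 0 * ι ℂ 1) ((q ^ 2)⁻¹ • (ι ℂ 1 * ι ℂ 0))
  | r12_14 : GrRel q (ι ℂ 0 * ι ℂ 2) ((q ^ 2)⁻¹ • (ι ℂ 2 * ι ℂ 0))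
  | r12_23 : GrRel q (ι ℂ 0 * ι ℂ 3) (q ^ 2 • (ι ℂ 3 * ι ℂ 0))
  | r12_24 : GrRel q (ι ℂ 0 * ι ℂ 4) (q ^ 2 • (ι ℂ 4 * ι ℂ 0))
  | r13_23 : GrRel q (ι ℂ 1 * ι ℂ 3) (q ^ 2 • (ι ℂ 3 * ι ℂ 1))
  | r13_24 : GrRel q (ι ℂ 1 * ι ℂ 4) (q ^ 2 • (ι ℂ 4 * ι ℂ 1))
  | r14_23 : GrRel q (ι ℂ 2 * ι ℂ 3) (q ^ 2 • (ι ℂ 3 * ι ℂ 2))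
  | r14_24 : GrRel q (ι ℂ 2 * ι ℂ 4) (q ^ 2 • (ι ℂ 4 * ι ℂ 2))
  | central34 (i : Fin 6) : GrRel q (ι ℂ 5 * ι ℂ i) (ι ℂ i * ι ℂ 5)
  | r13_14 : GrRel q (ι ℂ 1 * ι ℂ 2) (ι ℂ 2 * ι ℂ 1)
  | r23_24 : GrRel q (ι ℂ 3 * ι ℂ 4) (ι ℂ 4 * ι ℂ 3)
  | pluecker : GrRel q (ι ℂ 0 * ι ℂ 5) (q⁻¹ • (ι ℂ 1 * ι ℂ 4) - q • (ι ℂ 3 * ι ℂ 2))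

/-- The homogeneous coordinate algebra `A = A(Gr_θ(2;4))`. -/
abbrev GrAlg (q : ℂ) := RingQuot (GrRel q)

/-- The images of the minors: `Λm q 0 = Λ¹², Λm q 1 = Λ¹³, Λm q 2 = Λ¹⁴, Λm q 3 = Λ²³,
`Λm q 4 = Λ²⁴`, `Λm q 5 = Λ³⁴`. -/
def Λm (q : ℂ) (i : Fin 6) : GrAlg q := RingQuot.mkAlgHom ℂ (GrRel q) (ι ℂ i)

/-!
`X` and `R` are combinations of the commuting generators `Λ¹²` and `Λ³⁴`, so they commute and
`R² - X² = q² Λ¹²Λ³⁴`. Multiplying the Plücker relation by `q²` and using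
`Λ¹⁴Λ²³ = q² Λ²³Λ¹⁴` turns this into `q Λ¹³Λ²⁴ - q Λ¹⁴Λ²³`.
-/

section CommutingSquares

variable {k A : Type*} [CommRing k] [Ring A] [Algebra k A] {a b : A}

theorem Commute.smul_sub_smul_add (h : Commute a b) (c : k) :
    Commute (c • (a - b)) (c • (a + b)) :=
  (((Commute.refl a).sub_left h.symm).add_right (h.sub_left (Commute.refl b))).smul_left c
    |>.smul_right c

theorem Commute.smul_add_mul_self_eq (h : Commute a b) (c : k) :
    c • (a + b) * c • (a + b) = c • (a - b) * c • (a - b) + (4 * c ^ 2) • (a * b) := by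
  simp only [smul_mul_smul_comm, add_mul, mul_add, sub_mul, mul_sub, h.eq]
  module

end CommutingSquares

section Relations

variable (q : ℂ)

theorem commute_Λm_five (i : Fin 6) : Commute (Λm q 5) (Λm q i) := by
  unfold Commute SemiconjBy
  simpa only [Λm, map_mul] using RingQuot.mkAlgHom_rel ℂ (GrRel.central34 (q := q) i)

theorem Λm_two_mul_Λm_three : Λm q 2 * Λm q 3 = q ^ 2 • (Λm q 3 * Λm q 2) := by
  simpa only [Λm, map_mul, map_smul] using RingQuot.mkAlgHom_rel ℂ (GrRel.r14_23 (q := q))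

theorem pluecker_relation :
    Λm q 0 * Λm q 5 = q⁻¹ • (Λm q 1 * Λm q 4) - q • (Λm q 3 * Λm q 2) := by
  simpa only [Λm, map_mul, map_sub, map_smul] using
    RingQuot.mkAlgHom_rel ℂ (GrRel.pluecker (q := q))

theorem sq_smul_Λm_zero_mul_Λm_five :
    q ^ 2 • (Λm q 0 * Λm q 5) = q • (Λm q 1 * Λm q 4) - q • (Λm q 2 * Λm q 3) := by
  rw [pluecker_relation, Λm_two_mul_Λm_three, smul_sub, smul_smul, smul_smul, smul_smul, sq,
    mul_self_mul_inv, mul_comm]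

end Relations

theorem sphere_relation_general (q : ℂ)
    (X R : GrAlg q)
    (hX : X = (q / 2) • (Λm q 0 - Λm q 5))
    (hR : R = (q / 2) • (Λm q 0 + Λm q 5)) :
    X * R = R * X ∧
      q • (Λm q 1 * Λm q 4) - q • (Λm q 2 * Λm q 3) + X * X = R * R := by
  subst hX hR
  have hcomm : Commute (Λm q 0) (Λm q 5) := (commute_Λm_five q 0).symm
  refine ⟨(hcomm.smul_sub_smul_add (q / 2)).eq, ?_⟩
  have hcoeff : 4 * (q / 2) ^ 2 = q ^ 2 := by ring
  rw [hcomm.smul_add_mul_self_eq, hcoeff, sq_smul_Λm_zero_mul_Λm_five, add_comm]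

/-- With `X = (q/2)(Λ¹² − Λ³⁴)` and `R = (q/2)(Λ¹² + Λ³⁴)`, the elements `X` and `R`
commute and the sphere relation `qΛ¹³Λ²⁴ − qΛ¹⁴Λ²³ + X² = R²` holds in
`A(Gr_θ(2;4))`. -/
theorem sphere_relation (q : ℂ) (hq : q ≠ 0)
    (X R : GrAlg q)
    (hX : X = (q / 2) • (Λm q 0 - Λm q 5))
    (hR : R = (q / 2) • (Λm q 0 + Λm q 5)) :
    X * R = R * X ∧
      q • (Λm q 1 * Λm q 4) - q • (Λm q 2 * Λm q 3) + X * X = R * R :=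
  sphere_relation_general q X R hX hR
end
end
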